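/- arXiv:1205.1258 — 4 statements merged into one kernel-verified Lean document; each statement's English description precedes it below -/
import Mathlib

section
/- The front compatibility criterion is preserved under the front-element dynamics: if a one-parameter family of solutions (r(λ,t), g(λ,t)) of the front-element ODE satisfies g·J(∂r/∂λ) = 0 and |g|=1, g·(∂g/∂λ)=0 at time t, then d/dt [g·J(∂r/∂λ)] = 0 at that time. -/
/-!
Differentiating gives `d/dt [g·J r_λ] = ġ·J r_λ + g·J ∂_t r_λ`. Since `|g| = 1` and
`g·J r_λ = 0`, the planar vector `r_λ` is parallel to `g`: `r_λ = (g·r_λ) g`. The burning term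
contributes `v₀ g·g_λ = 0`, and, `J` being a rotation, the two strain contributions are
`−(g·r_λ)(g·A n)` and `(g·r_λ)(g·J Aᵀ g) = (g·r_λ)(g·A n)` for `n = −J g`.
-/

open Matrix

/-- Rotation by π/2 counterclockwise. -/
def J : Matrix (Fin 2) (Fin 2) ℝ := !![0, -1; 1, 0]

section Deriv

variable {𝕜 : Type*} [NontriviallyNormedField 𝕜] {ι κ : Type*} [Fintype ι]
  {f h : 𝕜 → ι → 𝕜} {f' h' : ι → 𝕜} {t : 𝕜}

theorem HasDerivAt.dotProduct (hf : HasDerivAt f f' t) (hh : HasDerivAt h h' t) :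
    HasDerivAt (fun s => f s ⬝ᵥ h s) (f' ⬝ᵥ h t + f t ⬝ᵥ h') t := by
  have h := HasDerivAt.fun_sum (u := Finset.univ) fun i _ =>
    (hasDerivAt_pi.mp hf i).mul (hasDerivAt_pi.mp hh i)
  rwa [Finset.sum_add_distrib] at h

theorem HasDerivAt.const_mulVec (M : Matrix κ ι 𝕜) (hf : HasDerivAt f f' t) :
    HasDerivAt (fun s => M *ᵥ f s) (M *ᵥ f') t :=
  hasDerivAt_pi.mpr fun k => by
    simpa [mulVec] using (hasDerivAt_const t (M k)).dotProduct hf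

end Deriv

theorem transpose_J : _root_.Jᵀ = -_root_.J := by
  ext i j; fin_cases i <;> fin_cases j <;> simp [_root_.J]

theorem J_mul_self : _root_.J * _root_.J = -1 := by
  ext i j; fin_cases i <;> fin_cases j <;> simp [_root_.J]

theorem J_mulVec_dotProduct (x y : Fin 2 → ℝ) : (J *ᵥ x) ⬝ᵥ y = -(x ⬝ᵥ J *ᵥ y) := by
  rw [← dotProduct_transpose_mulVec, transpose_J, neg_mulVec, dotProduct_neg, neg_neg,
    dotProduct_comm]

theorem J_mulVec_dotProduct_J_mulVec (x y : Fin 2 → ℝ) : (J *ᵥ x) ⬝ᵥ (J *ᵥ y) = x ⬝ᵥ y := by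
  rw [J_mulVec_dotProduct, mulVec_mulVec, J_mul_self, neg_mulVec, one_mulVec, dotProduct_neg,
    neg_neg]

theorem dotProduct_J_mulVec_J_mulVec (x y : Fin 2 → ℝ) : x ⬝ᵥ J *ᵥ (J *ᵥ y) = -(x ⬝ᵥ y) := by
  rw [mulVec_mulVec, J_mul_self, neg_mulVec, one_mulVec, dotProduct_neg]

/-- Expansion in the orthogonal frame `g, J g`. -/
theorem dotProduct_self_smul_eq (g r : Fin 2 → ℝ) :
    (g ⬝ᵥ g) • r = (g ⬝ᵥ r) • g + ((J *ᵥ g) ⬝ᵥ r) • (J *ᵥ g) := by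
  ext i; fin_cases i <;> simp [_root_.J, dotProduct, mulVec, Fin.sum_univ_two] <;> ring

theorem eq_dotProduct_smul_of_dotProduct_J_mulVec_eq_zero {g r : Fin 2 → ℝ}
    (hg : g ⬝ᵥ g = 1) (hr : g ⬝ᵥ J *ᵥ r = 0) : r = (g ⬝ᵥ r) • g := by
  have h := dotProduct_self_smul_eq g r
  rwa [hg, one_smul, J_mulVec_dotProduct, hr, neg_zero, zero_smul, add_zero] at h

theorem dotProduct_J_mulVec_transpose_mulVec_self (A : Matrix (Fin 2) (Fin 2) ℝ)
    (g : Fin 2 → ℝ) :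
    g ⬝ᵥ J *ᵥ (Aᵀ *ᵥ g) = g ⬝ᵥ A *ᵥ -(J *ᵥ g) := by
  rw [mulVec_mulVec, ← dotProduct_transpose_mulVec, transpose_mul, transpose_transpose,
    ← mulVec_mulVec, transpose_J, neg_mulVec, mulVec_neg]

theorem front_compatibility_rate_eq_zero (v₀ : ℝ) (A : Matrix (Fin 2) (Fin 2) ℝ)
    {g r q : Fin 2 → ℝ} (hg : g ⬝ᵥ g = 1) (hr : g ⬝ᵥ J *ᵥ r = 0) (hq : g ⬝ᵥ q = 0) :
    ((g ⬝ᵥ A *ᵥ -(J *ᵥ g)) • -(J *ᵥ g)) ⬝ᵥ J *ᵥ r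
      + g ⬝ᵥ J *ᵥ (Aᵀ *ᵥ r - v₀ • J *ᵥ q) = 0 := by
  have hAr : g ⬝ᵥ J *ᵥ (Aᵀ *ᵥ r) = (g ⬝ᵥ r) * (g ⬝ᵥ A *ᵥ -(J *ᵥ g)) := by
    rw [eq_dotProduct_smul_of_dotProduct_J_mulVec_eq_zero hg hr, mulVec_smul, mulVec_smul,
      dotProduct_smul, dotProduct_J_mulVec_transpose_mulVec_self, smul_eq_mul, dotProduct_smul,
      hg, smul_eq_mul, mul_one]
  rw [smul_dotProduct, neg_dotProduct, J_mulVec_dotProduct_J_mulVec, mulVec_sub, dotProduct_sub,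
    hAr, mulVec_smul, dotProduct_smul, dotProduct_J_mulVec_J_mulVec, hq]
  simp only [smul_eq_mul, neg_zero, mul_zero, sub_zero]
  ring

theorem front_compatibility_preserved_general
    (v₀ : ℝ)
    (A : Matrix (Fin 2) (Fin 2) ℝ)
    (g rlam glam : ℝ → Fin 2 → ℝ) (t₀ : ℝ)
    (n : Fin 2 → ℝ) (hn : n = -(J *ᵥ g t₀))
    (hg1 : g t₀ ⬝ᵥ g t₀ = 1)
    (hcomp : g t₀ ⬝ᵥ (J *ᵥ rlam t₀) = 0)
    (hglam : g t₀ ⬝ᵥ glam t₀ = 0)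
    (hgdot : HasDerivAt g ((g t₀ ⬝ᵥ (A *ᵥ n)) • n) t₀)
    (hrlamdot : HasDerivAt rlam
      (A.transpose *ᵥ rlam t₀ - v₀ • (J *ᵥ glam t₀)) t₀) :
    HasDerivAt (fun t => g t ⬝ᵥ (J *ᵥ rlam t)) 0 t₀ := by
  subst hn
  simpa only [front_compatibility_rate_eq_zero v₀ A hg1 hcomp hglam] using
    hgdot.dotProduct (hrlamdot.const_mulVec J)

/-- The front compatibility criterion is preserved under the front-element
dynamics.  Here `g t` is the tangent orientation of the front element at parameter value
`λ₀` and time `t`, `rlam t = ∂r/∂λ`, `glam t = ∂g/∂λ`, `A = ∇u(r(λ₀,t₀),t₀)` is the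
velocity gradient at the relevant point, and `n = −J g(t₀)`.  If at time `t₀` the
compatibility condition `g·J(∂r/∂λ) = 0` holds together with `|g| = 1` and `g·(∂g/∂λ) = 0`,
and `g`, `∂r/∂λ` evolve by the front-element ODE (with equality of mixed partials),
then `d/dt [g·J(∂r/∂λ)] = 0` at `t₀`. -/
theorem front_compatibility_preserved
    (v₀ : ℝ) (hv₀ : 0 ≤ v₀)
    (A : Matrix (Fin 2) (Fin 2) ℝ)
    (g rlam glam : ℝ → Fin 2 → ℝ) (t₀ : ℝ)
    (n : Fin 2 → ℝ) (hn : n = -(J *ᵥ g t₀))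
    (hg1 : g t₀ ⬝ᵥ g t₀ = 1)
    (hcomp : g t₀ ⬝ᵥ (J *ᵥ rlam t₀) = 0)
    (hglam : g t₀ ⬝ᵥ glam t₀ = 0)
    (hgdot : HasDerivAt g ((g t₀ ⬝ᵥ (A *ᵥ n)) • n) t₀)
    (hrlamdot : HasDerivAt rlam
      (A.transpose *ᵥ rlam t₀ - v₀ • (J *ᵥ glam t₀)) t₀) :
    HasDerivAt (fun t => g t ⬝ᵥ (J *ᵥ rlam t)) 0 t₀ :=
  front_compatibility_preserved_general v₀ A g rlam glam t₀ n hn hg1 hcomp hglam hgdot hrlamdot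
end

section
/- For an incompressible flow (ν = −μ), the eigenvalues at a burning fixed point are λ₀ = −μ and λ± = (−μ ± √(μ² + 4μμ′))/2, and the stability table holds: μ>0, μ′>0 gives SSU; μ>0, μ′<0 gives SSS; μ<0, μ′>0 gives UUU; μ<0, μ′<0 gives SUU. -/
/-- For an incompressible flow (`ν = −μ`) the eigenvalues at a burning
fixed point are `l0 = −μ` and `λ± = (−μ ± √(μ² + 4μμ′))/2` (here `s` is a complex square
root of `μ² + 4μμ′`), with `λ₊λ₋ = −μμ′`, `λ₊ + λ₋ = −μ`, and the stability table:
`μ>0, μ′>0` SSU; `μ>0, μ′<0` SSS; `μ<0, μ′>0` UUU; `μ<0, μ′<0` SUU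
(classifying eigenvalues by the sign of the real part). -/
theorem incompressible_stability_table
    (μ μ' : ℝ) (hμ : μ ≠ 0)
    (s : ℂ) (hs : s ^ 2 = (μ : ℂ) ^ 2 + 4 * (μ : ℂ) * (μ' : ℂ)) :
    let l0 : ℂ := -(μ : ℂ)
    let lp : ℂ := (-(μ : ℂ) + s) / 2
    let lm : ℂ := (-(μ : ℂ) - s) / 2
    lp * lm = -((μ : ℂ) * (μ' : ℂ)) ∧
    lp + lm = -(μ : ℂ) ∧
    (0 < μ → 0 < μ' → l0.re < 0 ∧
      ((0 < lp.re ∧ lm.re < 0) ∨ (lp.re < 0 ∧ 0 < lm.re))) ∧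
    (0 < μ → μ' < 0 → l0.re < 0 ∧ lp.re < 0 ∧ lm.re < 0) ∧
    (μ < 0 → 0 < μ' → 0 < l0.re ∧ 0 < lp.re ∧ 0 < lm.re) ∧
    (μ < 0 → μ' < 0 → 0 < l0.re ∧
      ((0 < lp.re ∧ lm.re < 0) ∨ (lp.re < 0 ∧ 0 < lm.re))) := by
  intro l0 lp lm
  obtain ⟨h1, h2⟩ :
      s.re * s.re - s.im * s.im = μ * μ + 4 * μ * μ' ∧ s.re * s.im + s.im * s.re = 0 := by
    have h := hs; rw [Complex.ext_iff] at h
    simpa [pow_two, Complex.mul_re, Complex.mul_im] using h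
  have hab : s.re * s.im = 0 := by linarith
  have hlp : lp.re = (-μ + s.re) / 2 := by
    show (((-(μ : ℂ) + s) / 2).re) = _
    simp [Complex.div_re, Complex.normSq]
  have hlm : lm.re = (-μ - s.re) / 2 := by
    show (((-(μ : ℂ) - s) / 2).re) = _
    simp [Complex.div_re, Complex.normSq]
  have hl0 : l0.re = -μ := by simp [l0]
  refine ⟨?_, ?_, ?_, ?_, ?_, ?_⟩
  · show ((-(μ : ℂ) + s) / 2) * ((-(μ : ℂ) - s) / 2) = -((μ : ℂ) * (μ' : ℂ))
    linear_combination (-(1 : ℂ)/4) * hs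
  · show ((-(μ : ℂ) + s) / 2) + ((-(μ : ℂ) - s) / 2) = -(μ : ℂ)
    ring
  · intro h3 h4
    refine ⟨by rw [hl0]; linarith, ?_⟩
    rcases mul_eq_zero.mp hab with ha | hb
    · exfalso; nlinarith
    · rcases lt_trichotomy s.re 0 with hc | hc | hc
      · right; rw [hlp, hlm]; constructor <;> nlinarith
      · exfalso; nlinarith
      · left; rw [hlp, hlm]; constructor <;> nlinarith
  · intro h3 h4
    refine ⟨by rw [hl0]; linarith, ?_⟩
    rcases mul_eq_zero.mp hab with ha | hb
    · rw [hlp, hlm, ha]; constructor <;> linarith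
    · rw [hlp, hlm]; constructor <;> nlinarith
  · intro h3 h4
    refine ⟨by rw [hl0]; linarith, ?_⟩
    rcases mul_eq_zero.mp hab with ha | hb
    · rw [hlp, hlm, ha]; constructor <;> linarith
    · rw [hlp, hlm]; constructor <;> nlinarith
  · intro h3 h4
    refine ⟨by rw [hl0]; linarith, ?_⟩
    rcases mul_eq_zero.mp hab with ha | hb
    · exfalso; nlinarith
    · rcases lt_trichotomy s.re 0 with hc | hc | hc
      · right; rw [hlp, hlm]; constructor <;> nlinarith
      · exfalso; nlinarith
      · left; rw [hlp, hlm]; constructor <;> nlinarith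
end

section
/- Curvature–rotation relation: at a burning fixed point, μ′ = μ + v₀κ, where κ is the signed curvature of the level set C = {|u| = v₀}, μ is defined by (∇u)ᵀg = μg, and μ′ by du′/dλ = μ′ g′ in the rotating frame of C. -/
open Matrix

/-- Curvature–rotation relation `μ′ = μ + v₀κ` at a burning fixed point.
The level set `C` is parameterized by arclength `λ`; `R λ` is the rotation matrix of the
moving frame, with normal `e₁′(λ)` = column 0 of `R λ` and tangent `e₂′(λ)` = column 1.
At the fixed point `λ₀`: `n = e₁′(λ₀)`, `g = e₂′(λ₀)`, `u = −v₀n`, `du/dλ = μg`, the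
frame components `u′(λ) = R(λ)ᵀ u(λ)` satisfy `du′/dλ = μ′(0,1)`, and the signed
curvature is `κ = e₂′·(de₁′/dλ)`.  Then `μ′ = μ + v₀κ`. -/
theorem curvature_rotation_relation
    (v₀ μ μ' κ lam₀ : ℝ) (hv₀ : 0 < v₀)
    (R : ℝ → Matrix (Fin 2) (Fin 2) ℝ) (Rd : Matrix (Fin 2) (Fin 2) ℝ)
    (U : ℝ → Fin 2 → ℝ) (n g : Fin 2 → ℝ)
    (horth : ∀ lam, (R lam).transpose * R lam = 1)
    (hRd : ∀ i j, HasDerivAt (fun lam => R lam i j) (Rd i j) lam₀)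
    (hn : n = fun i => R lam₀ i 0)
    (hg : g = fun i => R lam₀ i 1)
    (hfp : U lam₀ = -(v₀ • n))
    (hU : HasDerivAt U (μ • g) lam₀)
    (hU' : HasDerivAt (fun lam => (R lam).transpose *ᵥ U lam) ![0, μ'] lam₀)
    (hκ : κ = g ⬝ᵥ (fun i => Rd i 0)) :
    μ' = μ + v₀ * κ := by
  -- component derivatives of U
  have hUc : ∀ j, HasDerivAt (fun lam => U lam j) ((μ • g) j) lam₀ :=
    hasDerivAt_pi.mp hU
  -- derivative of component 1 of R lamᵀ *ᵥ U lam, computed by product rule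
  have hF1 : HasDerivAt (fun lam => R lam 0 1 * U lam 0 + R lam 1 1 * U lam 1)
      (Rd 0 1 * U lam₀ 0 + R lam₀ 0 1 * (μ • g) 0
        + (Rd 1 1 * U lam₀ 1 + R lam₀ 1 1 * (μ • g) 1)) lam₀ :=
    (((hRd 0 1).mul (hUc 0)).add ((hRd 1 1).mul (hUc 1)))
  -- component 1 of the hypothesis hU'
  have hU'1 : HasDerivAt (fun lam => R lam 0 1 * U lam 0 + R lam 1 1 * U lam 1) μ' lam₀ := by
    have h := (hasDerivAt_pi.mp hU') 1
    simpa [Matrix.mulVec, dotProduct, Fin.sum_univ_two] using h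
  have key : μ' = Rd 0 1 * U lam₀ 0 + R lam₀ 0 1 * (μ • g) 0
      + (Rd 1 1 * U lam₀ 1 + R lam₀ 1 1 * (μ • g) 1) := hU'1.unique hF1
  -- derivative of the (constant) orthogonality relation, entry (1,0)
  have hconst : (fun lam => R lam 0 1 * R lam 0 0 + R lam 1 1 * R lam 1 0) = fun _ => (0:ℝ) := by
    funext lam
    have h := congrFun (congrFun (horth lam) 1) 0
    simpa [Matrix.mul_apply, Matrix.one_apply, Fin.sum_univ_two, mul_comm] using h
  have hd0 : HasDerivAt (fun lam => R lam 0 1 * R lam 0 0 + R lam 1 1 * R lam 1 0)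
      (Rd 0 1 * R lam₀ 0 0 + R lam₀ 0 1 * Rd 0 0
        + (Rd 1 1 * R lam₀ 1 0 + R lam₀ 1 1 * Rd 1 0)) lam₀ :=
    (((hRd 0 1).mul (hRd 0 0)).add ((hRd 1 1).mul (hRd 1 0)))
  have hzero : Rd 0 1 * R lam₀ 0 0 + R lam₀ 0 1 * Rd 0 0
      + (Rd 1 1 * R lam₀ 1 0 + R lam₀ 1 1 * Rd 1 0) = 0 := by
    have h := hd0.unique (hconst ▸ hasDerivAt_const lam₀ (0:ℝ))
    linarith [h]
  -- norm of g: entry (1,1) of the orthogonality relation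
  have hnorm : R lam₀ 0 1 * R lam₀ 0 1 + R lam₀ 1 1 * R lam₀ 1 1 = 1 := by
    have h := congrFun (congrFun (horth lam₀) 1) 1
    simpa [Matrix.mul_apply, Matrix.one_apply, Fin.sum_univ_two, mul_comm] using h
  subst hn hg hκ
  have hU0 := congrFun hfp 0
  have hU1 := congrFun hfp 1
  simp only [dotProduct, Fin.sum_univ_two, Pi.smul_apply, smul_eq_mul,
    Pi.neg_apply] at key hU0 hU1 ⊢
  rw [hU0, hU1] at key
  linear_combination key - v₀ * hzero + μ * hnorm
end

section
/- At a burning fixed point, the signed curvature of the level set |u| = v₀ equals κ = (v₀ a·g − μ²)/(v₀ ν), where a·g = g·(g·∇∇(n·u)) (i.e. aᵢ = gₖ nⱼ ∂²uⱼ/∂xₖ∂xᵢ contracted with g), ν is the eigenvalue of (∇u)ᵀ complementary to μ, using the level-set curvature formula κ = [e₂′·(∇∇f)e₂′]/[∇f·e₁′] with f = |u|² − v₀². -/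
open Matrix

/-- At a burning fixed point the signed curvature of the level set
`|u| = v₀` equals `κ = (v₀ a·g − μ²)/(v₀ ν)`.  Here `A = ∇u(r)` (so `Aᵢⱼ = u_{j,i}`),
`T j k i = ∂²u_j/∂x_k∂x_i` are the Hessian entries, `ur = u(r) = −v₀n`,
`a·g = g_k n_j u_{j,ki} g_i`, `Gf = ∇(|u|²) = 2(∇u)u`, `Hf = ∇∇(|u|²)`, and the
curvature is given by the level-set formula `κ = [g·(Hf)g]/[Gf·n]` for
`f = |u|² − v₀²`.  The two component identities `Gf·n = −2v₀ν` and
`g·(Hf)g = 2μ² − 2v₀ a·g` also hold. -/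
theorem curvature_of_level_set
    (v₀ μ ν κ : ℝ) (hv₀ : 0 < v₀) (hν : ν ≠ 0)
    (A : Matrix (Fin 2) (Fin 2) ℝ) (T : Fin 2 → Fin 2 → Fin 2 → ℝ)
    (ur g n : Fin 2 → ℝ) (ag : ℝ)
    (Gf : Fin 2 → ℝ) (Hf : Matrix (Fin 2) (Fin 2) ℝ)
    (hg : g ⬝ᵥ g = 1) (hn : n = -(J *ᵥ g))
    (hfp : ur = -(v₀ • n))
    (heig : A.transpose *ᵥ g = μ • g)
    (htr : A.trace = μ + ν)
    (hag : ag = ∑ i, ∑ k, ∑ j, g k * n j * T j k i * g i)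
    (hGf : Gf = fun i => 2 * ∑ j, A i j * ur j)
    (hHf : Hf = Matrix.of fun k i => 2 * ∑ j, (T j k i * ur j + A k j * A i j))
    (hκ : κ = (g ⬝ᵥ (Hf *ᵥ g)) / (Gf ⬝ᵥ n)) :
    Gf ⬝ᵥ n = -(2 * v₀ * ν) ∧
    g ⬝ᵥ (Hf *ᵥ g) = 2 * μ ^ 2 - 2 * v₀ * ag ∧
    κ = (v₀ * ag - μ ^ 2) / (v₀ * ν) := by
  have h0 := congrFun heig 0
  have h1 := congrFun heig 1
  have hn0 : n 0 = g 1 := by simp [hn, _root_.J, Matrix.mulVec, dotProduct, Fin.sum_univ_two]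
  have hn1 : n 1 = -g 0 := by simp [hn, _root_.J, Matrix.mulVec, dotProduct, Fin.sum_univ_two]
  have hu0 : ur 0 = -(v₀ * g 1) := by simp [hfp, hn0]
  have hu1 : ur 1 = v₀ * g 0 := by simp [hfp, hn1]
  simp only [Matrix.mulVec, dotProduct, Fin.sum_univ_two, Matrix.transpose_apply,
    Pi.smul_apply, smul_eq_mul, Matrix.trace, Matrix.diag] at h0 h1 hg htr
  have e1 : Gf ⬝ᵥ n = -(2 * v₀ * ν) := by
    simp only [hGf, dotProduct, Fin.sum_univ_two, hn0, hn1, hu0, hu1]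
    linear_combination (-2*v₀*(g 0^2 + g 1^2))*htr + (2*v₀*(g 0))*h0 + (2*v₀*(g 1))*h1 +
      (-2*v₀*ν)*hg
  have e2 : g ⬝ᵥ (Hf *ᵥ g) = 2 * μ ^ 2 - 2 * v₀ * ag := by
    simp only [hHf, hag, Matrix.mulVec, dotProduct, Fin.sum_univ_two, Matrix.of_apply,
      hn0, hn1, hu0, hu1]
    linear_combination (2*(A 0 0 * g 0 + A 1 0 * g 1 + μ * g 0))*h0 +
      (2*(A 0 1 * g 0 + A 1 1 * g 1 + μ * g 1))*h1 + (2*μ^2)*hg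
  refine ⟨e1, e2, ?_⟩
  rw [hκ, e1, e2]
  rw [div_eq_div_iff (by simp [hv₀.ne', hν]) (mul_ne_zero hv₀.ne' hν)]
  ring
end
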